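/- The (real) Fréchet derivative Df(z) : ℂ³ → ℝ³ of the Harvey–Lawson map fails to be surjective at z = (z₁, z₂, z₃) if and only if at least two of the coordinates z₁, z₂, z₃ vanish; that is, the set of singular points of fibers of f is the union of the three coordinate axes (ℂ × {0} × {0}) ∪ ({0} × ℂ × {0}) ∪ ({0} × {0} × ℂ). -/

import Mathlib

/-!
The first row of `Df(z)` is `w ↦ Im (z₁z₂ w₀ + z₀z₂ w₁ + z₀z₁ w₂)`, which vanishes identically
exactly when two coordinates of `z` vanish; then `Df(z)` misses `(1, 0, 0)`. Conversely, if
`zⱼ, zₖ ≠ 0` and `l` is the third index, the directions `zⱼ eⱼ`, `zₖ eₖ` and `i·conj (zⱼ zₖ) eₗ`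
are mapped to three vectors whose determinant is
`4 (p² (|zⱼ|² + |zₖ|²) + |zⱼ|⁴ |zₖ|⁴) > 0`, where `p = Im (z₀ z₁ z₂)`.
-/

open Complex

/-- The Harvey–Lawson map `f : ℂ³ → ℝ³`. -/
noncomputable def HarveyLawson (z : Fin 3 → ℂ) : Fin 3 → ℝ :=
  ![(z 0 * z 1 * z 2).im,
    ‖z 0‖ ^ 2 - ‖z 1‖ ^ 2,
    ‖z 0‖ ^ 2 - ‖z 2‖ ^ 2]

open ContinuousLinearMap ComplexConjugate

theorem LinearMap.surjective_of_isUnit_det {R M n : Type*} [CommRing R] [AddCommGroup M]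
    [Module R M] [Fintype n] [DecidableEq n] (T : M →ₗ[R] n → R) (u : n → M)
    (h : IsUnit (Matrix.of fun i j => T (u j) i).det) : Function.Surjective T := by
  intro v
  obtain ⟨c, rfl⟩ :=
    Matrix.mulVec_surjective_iff_isUnit.2 ((Matrix.isUnit_iff_isUnit_det _).2 h) v
  refine ⟨∑ j, c j • u j, funext fun i => ?_⟩
  simp [Matrix.mulVec, dotProduct, mul_comm]

noncomputable def harveyLawsonFDeriv (z : Fin 3 → ℂ) : (Fin 3 → ℂ) →L[ℝ] Fin 3 → ℝ :=
  pi ![imCLM.comp ((z 1 * z 2) • proj 0 + (z 0 * z 2) • proj 1 + (z 0 * z 1) • proj 2),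
    2 • (innerSL ℝ (z 0)).comp (proj 0) - 2 • (innerSL ℝ (z 1)).comp (proj 1),
    2 • (innerSL ℝ (z 0)).comp (proj 0) - 2 • (innerSL ℝ (z 2)).comp (proj 2)]

theorem harveyLawsonFDeriv_apply (z w : Fin 3 → ℂ) :
    harveyLawsonFDeriv z w =
      ![(z 1 * z 2 * w 0 + z 0 * z 2 * w 1 + z 0 * z 1 * w 2).im,
        2 * inner ℝ (z 0) (w 0) - 2 * inner ℝ (z 1) (w 1),
        2 * inner ℝ (z 0) (w 0) - 2 * inner ℝ (z 2) (w 2)] := by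
  ext i
  fin_cases i <;> simp [harveyLawsonFDeriv, -Complex.inner]

theorem hasFDerivAt_harveyLawson (z : Fin 3 → ℂ) :
    HasFDerivAt HarveyLawson (harveyLawsonFDeriv z) z := by
  have hproj (i : Fin 3) := hasFDerivAt_apply (𝕜 := ℝ) i z
  have hprod : HasFDerivAt (fun z : Fin 3 → ℂ => z 0 * z 1 * z 2)
      ((z 1 * z 2) • proj 0 + (z 0 * z 2) • proj 1 + (z 0 * z 1) • proj 2 :
        (Fin 3 → ℂ) →L[ℝ] ℂ) z := by
    refine (((hproj 0).mul (hproj 1)).mul (hproj 2)).congr_fderiv ?_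
    ext w
    simp only [Pi.mul_apply, smul_add, add_apply, smul_apply, proj_apply, smul_eq_mul]
    ring
  refine hasFDerivAt_pi'' fun i => ?_
  fin_cases i
  · exact imCLM.hasFDerivAt.comp z hprod
  · exact (hproj 0).norm_sq.sub (hproj 1).norm_sq
  · exact (hproj 0).norm_sq.sub (hproj 2).norm_sq

theorem surjective_harveyLawsonFDeriv_of_ne_zero₀₁ {z : Fin 3 → ℂ} (h0 : z 0 ≠ 0)
    (h1 : z 1 ≠ 0) : Function.Surjective (harveyLawsonFDeriv z) := by
  refine (harveyLawsonFDeriv z).toLinearMap.surjective_of_isUnit_det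
    ![![z 0, 0, 0], ![0, z 1, 0], ![0, 0, I * conj (z 0 * z 1)]]
    (isUnit_iff_ne_zero.2 (ne_of_gt ?_))
  have := normSq_pos.2 h0
  have := normSq_pos.2 h1
  calc 0 < 4 * ((z 0 * z 1 * z 2).im ^ 2 * (normSq (z 0) + normSq (z 1)) +
        normSq (z 0) ^ 2 * normSq (z 1) ^ 2) := by positivity
    _ = _ := by
      simp only [Matrix.det_fin_three, Matrix.of_apply, coe_coe, harveyLawsonFDeriv_apply,
        Matrix.cons_val, Complex.inner, normSq_apply, map_mul, mul_re, mul_im, add_im, conj_re,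
        conj_im, I_re, I_im, zero_re, zero_im]
      ring

theorem surjective_harveyLawsonFDeriv_of_ne_zero₀₂ {z : Fin 3 → ℂ} (h0 : z 0 ≠ 0)
    (h2 : z 2 ≠ 0) : Function.Surjective (harveyLawsonFDeriv z) := by
  refine (harveyLawsonFDeriv z).toLinearMap.surjective_of_isUnit_det
    ![![z 0, 0, 0], ![0, I * conj (z 0 * z 2), 0], ![0, 0, z 2]]
    (isUnit_iff_ne_zero.2 (ne_of_gt ?_))
  have := normSq_pos.2 h0
  have := normSq_pos.2 h2
  calc 0 < 4 * ((z 0 * z 1 * z 2).im ^ 2 * (normSq (z 0) + normSq (z 2)) +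
        normSq (z 0) ^ 2 * normSq (z 2) ^ 2) := by positivity
    _ = _ := by
      simp only [Matrix.det_fin_three, Matrix.of_apply, coe_coe, harveyLawsonFDeriv_apply,
        Matrix.cons_val, Complex.inner, normSq_apply, map_mul, mul_re, mul_im, add_im, conj_re,
        conj_im, I_re, I_im, zero_re, zero_im]
      ring

theorem surjective_harveyLawsonFDeriv_of_ne_zero₁₂ {z : Fin 3 → ℂ} (h1 : z 1 ≠ 0)
    (h2 : z 2 ≠ 0) : Function.Surjective (harveyLawsonFDeriv z) := by
  refine (harveyLawsonFDeriv z).toLinearMap.surjective_of_isUnit_det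
    ![![I * conj (z 1 * z 2), 0, 0], ![0, z 1, 0], ![0, 0, z 2]]
    (isUnit_iff_ne_zero.2 (ne_of_gt ?_))
  have := normSq_pos.2 h1
  have := normSq_pos.2 h2
  calc 0 < 4 * ((z 0 * z 1 * z 2).im ^ 2 * (normSq (z 1) + normSq (z 2)) +
        normSq (z 1) ^ 2 * normSq (z 2) ^ 2) := by positivity
    _ = _ := by
      simp only [Matrix.det_fin_three, Matrix.of_apply, coe_coe, harveyLawsonFDeriv_apply,
        Matrix.cons_val, Complex.inner, normSq_apply, map_mul, mul_re, mul_im, add_im, conj_re,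
        conj_im, I_re, I_im, zero_re, zero_im]
      ring

theorem not_surjective_harveyLawsonFDeriv {z : Fin 3 → ℂ} (h01 : z 0 * z 1 = 0)
    (h02 : z 0 * z 2 = 0) (h12 : z 1 * z 2 = 0) :
    ¬Function.Surjective (harveyLawsonFDeriv z) := by
  have hzero (w : Fin 3 → ℂ) : harveyLawsonFDeriv z w 0 = 0 := by
    simp [harveyLawsonFDeriv_apply, h01, h02, h12]
  intro hsurj
  obtain ⟨w, hw⟩ := hsurj ![1, 0, 0]
  simpa [hzero] using congrFun hw 0

/-- The real Fréchet derivative of the Harvey–Lawson map fails to be surjective at `z`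
exactly when at least two of the coordinates of `z` vanish; i.e. the set of singular
points of fibers is the union of the three coordinate axes. -/
theorem harveyLawson_singular_points_eq_axes :
    {z : Fin 3 → ℂ | ¬ Function.Surjective (fderiv ℝ HarveyLawson z)} =
      {z : Fin 3 → ℂ | z 1 = 0 ∧ z 2 = 0} ∪
      {z : Fin 3 → ℂ | z 0 = 0 ∧ z 2 = 0} ∪
      {z : Fin 3 → ℂ | z 0 = 0 ∧ z 1 = 0} := by
  ext z
  simp only [Set.mem_ofPred_eq, Set.mem_union, (hasFDerivAt_harveyLawson z).fderiv]
  by_cases h0 : z 0 = 0 <;> by_cases h1 : z 1 = 0 <;> by_cases h2 : z 2 = 0 <;>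
    simp [h0, h1, h2, not_surjective_harveyLawsonFDeriv,
      surjective_harveyLawsonFDeriv_of_ne_zero₀₁, surjective_harveyLawsonFDeriv_of_ne_zero₀₂,
      surjective_harveyLawsonFDeriv_of_ne_zero₁₂]
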